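/- Fix d_B, r ≥ 1, set d_A := r·d_B, let ε ∈ (0,1) and θ ∈ (π/2, π] with cos θ = −ε/2, let O be the d_A×d_A diagonal matrix with diagonal entries ε·(e^{iθ}, e^{−iθ}, e^{iθ}, e^{−iθ}, …) alternating (last entry 0 if d_A is odd), and set Ō := O − (Tr O / d_A)·1_{d_A}. For U ∈ U(d_A) define V_U := U(1 + O)U†, J_U := Tr_E[(1_{d_A} ⊗ V_U) Ψ (1_{d_A} ⊗ V_U)†] (using ℂ^{d_A} ≅ ℂ^{d_B}⊗ℂ^{r}), and A_U := Tr_E[(1_{d_A} ⊗ U Ō U†) Ψ]. Then for all unitaries U₁, U₂ ∈ U(d_A): ‖J_{U₁} − J_{U₂}‖₁ ≥ ‖A_{U₁} + A_{U₁}† − A_{U₂} − A_{U₂}†‖₁ − 2ε². -/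

import Mathlib

noncomputable section
open scoped Kronecker Matrix ComplexOrder
open MeasureTheory

namespace Stmt

instance {m n : Type*} : MeasurableSpace (Matrix m n ℂ) := by unfold Matrix; infer_instance

/-- Trace norm `‖X‖₁ = Tr √(XᴴX)` (sum of singular values). -/
def traceNorm {m n : Type*} [Fintype m] [Fintype n] [DecidableEq n] (X : Matrix m n ℂ) : ℝ :=
  (((Matrix.posSemidef_conjTranspose_mul_self X).1.eigenvectorUnitary : Matrix n n ℂ) *
    Matrix.diagonal (((↑) : ℝ → ℂ) ∘ Real.sqrt ∘ (Matrix.posSemidef_conjTranspose_mul_self X).1.eigenvalues) *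
    (star (Matrix.posSemidef_conjTranspose_mul_self X).1.eigenvectorUnitary : Matrix n n ℂ)).trace.re

/-- ℓ²→ℓ² operator norm of a matrix (largest singular value). -/
def opNorm {m n : Type*} [Fintype m] [Fintype n] [DecidableEq n] (X : Matrix m n ℂ) : ℝ :=
  ‖LinearMap.toContinuousLinearMap (Matrix.toEuclideanLin X)‖

/-- Frobenius norm `‖X‖₂ = √(Tr(XᴴX))`. -/
def frobNorm {m n : Type*} [Fintype m] [Fintype n] (X : Matrix m n ℂ) : ℝ :=
  Real.sqrt ((Xᴴ * X).trace.re)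

/-- Projector `|Ψ⟩⟨Ψ|` onto the maximally entangled unit vector
`|Ψ⟩ = (1/√d) ∑ᵢ |i⟩⊗|i⟩`. -/
def Psi (d : ℕ) : Matrix (Fin d × Fin d) (Fin d × Fin d) ℂ :=
  fun p q => if p.1 = p.2 ∧ q.1 = q.2 then (1 / (d : ℂ)) else 0

/-- Partial trace over the environment (last) factor `E`. -/
def ptrE {A A' B E : Type*} [Fintype E] (M : Matrix (A × B × E) (A' × B × E) ℂ) :
    Matrix (A × B) (A' × B) ℂ :=
  fun x y => ∑ e, M (x.1, x.2, e) (y.1, y.2, e)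

/-- Partial trace over the last factor `E` of a fourfold product. -/
def ptrE4 {A F B E : Type*} [Fintype E]
    (M : Matrix (A × F × B × E) (A × F × B × E) ℂ) : Matrix (A × F × B) (A × F × B) ℂ :=
  fun x y => ∑ e, M (x.1, x.2.1, x.2.2, e) (y.1, y.2.1, y.2.2, e)

/-- Partial trace over the first factor `F`. -/
def ptrF {F X Y : Type*} [Fintype F] (M : Matrix (F × X) (F × Y) ℂ) : Matrix X Y ℂ :=
  fun x y => ∑ f, M (f, x) (f, y)

/-- Partial trace over the second factor. -/
def ptrSecond {F X : Type*} [Fintype X] (M : Matrix (F × X) (F × X) ℂ) : Matrix F F ℂ :=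
  fun f f' => ∑ x, M (f, x) (f', x)

/-- The diagonal matrix `O = ε·diag(e^{iθ}, e^{−iθ}, …)` (last entry `0` if `d` is odd). -/
def Omat (d : ℕ) (ε θ : ℝ) : Matrix (Fin d) (Fin d) ℂ :=
  Matrix.diagonal fun j =>
    if Odd d ∧ (j : ℕ) = d - 1 then 0
    else if Even (j : ℕ) then (ε : ℂ) * Complex.exp (Complex.I * (θ : ℂ))
    else (ε : ℂ) * Complex.exp (-(Complex.I * (θ : ℂ)))

/-- The traceless version `Ō = O − (Tr O / d)·1`. -/
def Obar (d : ℕ) (ε θ : ℝ) : Matrix (Fin d) (Fin d) ℂ :=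
  Omat d ε θ - ((Omat d ε θ).trace / (d : ℂ)) • 1

/-- Identification of `B × E` indices with `Fin (r·d_B)`. -/
def idxBE {d_B r : ℕ} (p : Fin d_B × Fin r) : Fin (r * d_B) :=
  finCongr (Nat.mul_comm d_B r) (finProdFinEquiv p)

/-- Reindex the rows of a square matrix on `ℂ^{r·d_B}` so that it becomes a map
`ℂ^{r d_B} → ℂ^{d_B}⊗ℂ^{r}`. -/
def toBE {d_B r : ℕ} (M : Matrix (Fin (r * d_B)) (Fin (r * d_B)) ℂ) :
    Matrix (Fin d_B × Fin r) (Fin (r * d_B)) ℂ :=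
  fun p a => M (idxBE p) a

/-- `Ψ` with its second (column) tensor factor reindexed as `B × E`. -/
def PsiBE (d_B r : ℕ) :
    Matrix (Fin (r * d_B) × Fin (r * d_B)) (Fin (r * d_B) × (Fin d_B × Fin r)) ℂ :=
  fun p q => Psi (r * d_B) p (q.1, idxBE q.2)

/-- The inclusion `S` of the first `d_A` standard basis vectors of `ℂ^{d_B}⊗ℂ^{r}`. -/
def Smat (d_A d_B r : ℕ) : Matrix (Fin d_B × Fin r) (Fin d_A) ℂ :=
  fun p a => if ((finProdFinEquiv p : Fin (d_B * r)) : ℕ) = (a : ℕ) then 1 else 0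

/-- `V = √(1−ε²)·|0⟩_F ⊗ V₀ + ε·|1⟩_F ⊗ V₁`. -/
def Vfull {d_A d_B r : ℕ} (ε : ℝ) (V0 VU : Matrix (Fin d_B × Fin r) (Fin d_A) ℂ) :
    Matrix (Fin 2 × Fin d_B × Fin r) (Fin d_A) ℂ :=
  fun p a =>
    (if p.1 = 0 then (Real.sqrt (1 - ε ^ 2) : ℂ) * V0 p.2 a else 0) +
    (if p.1 = 1 then (ε : ℂ) * VU p.2 a else 0)

/-- Kraus operator `K_i = (1 ⊗ ⟨i|_E) V₀`. -/
def Kraus {d_A d_B r : ℕ} (V0 : Matrix (Fin d_B × Fin r) (Fin d_A) ℂ) (i : Fin r) :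
    Matrix (Fin d_B) (Fin d_A) ℂ :=
  fun b a => V0 (b, i) a

/-- `V_U = U(1+O)U†` regarded as a map `ℂ^{r d_B} → ℂ^{d_B}⊗ℂ^{r}`. -/
def Veq (d_B r : ℕ) (ε θ : ℝ) (U : Matrix (Fin (r * d_B)) (Fin (r * d_B)) ℂ) :
    Matrix (Fin d_B × Fin r) (Fin (r * d_B)) ℂ :=
  toBE (U * (1 + Omat (r * d_B) ε θ) * Uᴴ)

/-- Choi state `J_U = Tr_E[(1 ⊗ V_U) Ψ (1 ⊗ V_U)†]` in the case `d_A = r·d_B`. -/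
def Jeq (d_B r : ℕ) (ε θ : ℝ) (U : Matrix (Fin (r * d_B)) (Fin (r * d_B)) ℂ) :
    Matrix (Fin (r * d_B) × Fin d_B) (Fin (r * d_B) × Fin d_B) ℂ :=
  ptrE (((1 : Matrix (Fin (r * d_B)) (Fin (r * d_B)) ℂ) ⊗ₖ Veq d_B r ε θ U) * Psi (r * d_B) *
    ((1 : Matrix (Fin (r * d_B)) (Fin (r * d_B)) ℂ) ⊗ₖ Veq d_B r ε θ U)ᴴ)

/-- Choi state `J_U = Tr_E[(1 ⊗ V_U) Ψ (1 ⊗ V_U)†]` in the case `d_A ≤ r·d_B`. -/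
def Jle (d_A d_B r : ℕ) (ε : ℝ) (V0 : Matrix (Fin d_B × Fin r) (Fin d_A) ℂ)
    (U : Matrix (Fin d_B × Fin r) (Fin d_B × Fin r) ℂ) :
    Matrix (Fin d_A × Fin 2 × Fin d_B) (Fin d_A × Fin 2 × Fin d_B) ℂ :=
  ptrE4 (((1 : Matrix (Fin d_A) (Fin d_A) ℂ) ⊗ₖ Vfull ε V0 (U * Smat d_A d_B r)) * Psi d_A *
    ((1 : Matrix (Fin d_A) (Fin d_A) ℂ) ⊗ₖ Vfull ε V0 (U * Smat d_A d_B r))ᴴ)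

/-- `C = Tr_E[(1 ⊗ Ṽ₀) Ψ (1 ⊗ (Ṽ_{U₁} − Ṽ_{U₂}))†]`. -/
def Cmat (d_A d_B r : ℕ) (V0 : Matrix (Fin d_B × Fin r) (Fin d_A) ℂ)
    (U₁ U₂ : Matrix (Fin d_B × Fin r) (Fin d_B × Fin r) ℂ) :
    Matrix (Fin d_A × Fin d_B) (Fin d_A × Fin d_B) ℂ :=
  ptrE (((1 : Matrix (Fin d_A) (Fin d_A) ℂ) ⊗ₖ V0) * Psi d_A *
    ((1 : Matrix (Fin d_A) (Fin d_A) ℂ) ⊗ₖ (U₁ * Smat d_A d_B r - U₂ * Smat d_A d_B r))ᴴ)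

/-- `A_U = Tr_E[(1 ⊗ U Ō U†) Ψ]`. -/
def Amat (d_B r : ℕ) (ε θ : ℝ) (U : Matrix (Fin (r * d_B)) (Fin (r * d_B)) ℂ) :
    Matrix (Fin (r * d_B) × Fin d_B) (Fin (r * d_B) × Fin d_B) ℂ :=
  ptrE (((1 : Matrix (Fin (r * d_B)) (Fin (r * d_B)) ℂ) ⊗ₖ toBE (U * Obar (r * d_B) ε θ * Uᴴ)) *
    PsiBE d_B r)


/-! ### Auxiliary development -/

section TraceNormTheory

variable {n : Type*} [Fintype n] [DecidableEq n]

lemma trace_conj_unitary (U : Matrix.unitaryGroup n ℂ) (D : Matrix n n ℂ) :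
    ((U : Matrix n n ℂ) * D * (U : Matrix n n ℂ)ᴴ).trace = D.trace := by
  rw [Matrix.trace_mul_cycle, ← Matrix.star_eq_conjTranspose,
    Unitary.coe_star_mul_self, Matrix.one_mul]

lemma conj_mul_conj (U : Matrix.unitaryGroup n ℂ) (D E : Matrix n n ℂ) :
    ((U : Matrix n n ℂ) * D * (U : Matrix n n ℂ)ᴴ) *
      ((U : Matrix n n ℂ) * E * (U : Matrix n n ℂ)ᴴ) =
    (U : Matrix n n ℂ) * (D * E) * (U : Matrix n n ℂ)ᴴ := by
  have hUU : (U : Matrix n n ℂ)ᴴ * (U : Matrix n n ℂ) = 1 := by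
    rw [← Matrix.star_eq_conjTranspose]; exact Unitary.coe_star_mul_self U
  simp only [Matrix.mul_assoc]
  rw [← Matrix.mul_assoc ((U : Matrix n n ℂ)ᴴ), hUU, Matrix.one_mul]

lemma spectral' {H : Matrix n n ℂ} (hH : H.IsHermitian) :
    H = (hH.eigenvectorUnitary : Matrix n n ℂ) * Matrix.diagonal (Complex.ofReal ∘ hH.eigenvalues)
        * (hH.eigenvectorUnitary : Matrix n n ℂ)ᴴ := by
  simpa [Matrix.star_eq_conjTranspose] using hH.spectral_theorem

open scoped MatrixOrder in
lemma traceNorm_of_isHermitian {H : Matrix n n ℂ} (hH : H.IsHermitian) :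
    traceNorm H = ∑ i, |hH.eigenvalues i| := by
  set U := hH.eigenvectorUnitary with hU
  set P : Matrix n n ℂ :=
    (U : Matrix n n ℂ) * Matrix.diagonal (fun i => Complex.ofReal |hH.eigenvalues i|) *
      (U : Matrix n n ℂ)ᴴ with hP
  have hdpsd : (Matrix.diagonal (fun i => Complex.ofReal |hH.eigenvalues i|)).PosSemidef := by
    refine Matrix.PosSemidef.diagonal fun i => ?_
    exact Complex.zero_le_real.mpr (abs_nonneg _)
  have hPsd : P.PosSemidef := hdpsd.mul_mul_conjTranspose_same _
  have hsq : P ^ 2 = Hᴴ * H := by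
    rw [hH.eq, pow_two, hP, conj_mul_conj]
    conv_rhs => rw [spectral' hH]
    rw [conj_mul_conj]
    congr 2
    rw [Matrix.diagonal_mul_diagonal, Matrix.diagonal_mul_diagonal]
    congr 1
    funext i
    simp only [Function.comp]
    norm_cast
    simp only [abs_mul_abs_self]
  have this : ((Matrix.posSemidef_conjTranspose_mul_self H).1.eigenvectorUnitary : Matrix n n ℂ) *
      Matrix.diagonal (((↑) : ℝ → ℂ) ∘ Real.sqrt ∘
        (Matrix.posSemidef_conjTranspose_mul_self H).1.eigenvalues) *
      (star (Matrix.posSemidef_conjTranspose_mul_self H).1.eigenvectorUnitary : Matrix n n ℂ) = P := by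
    have hsqrt : CFC.sqrt (Hᴴ * H) = P := CFC.sqrt_unique (by rw [← hsq, pow_two]) hPsd.nonneg
    rw [← hsqrt, CFC.sqrt_eq_cfc, cfc_nnreal_eq_real _ (Hᴴ * H)
      (Matrix.posSemidef_conjTranspose_mul_self H).nonneg,
      (Matrix.posSemidef_conjTranspose_mul_self H).1.cfc_eq]
    simp only [Matrix.IsHermitian.cfc, Unitary.conjStarAlgAut_apply]
    congr 3
    funext i
    simp [Function.comp_def,
      max_eq_left ((Matrix.posSemidef_conjTranspose_mul_self H).eigenvalues_nonneg i)]
  rw [traceNorm, this, hP, trace_conj_unitary, Matrix.trace_diagonal]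
  rw [← Complex.ofReal_sum]
  simp

lemma trace_eq_sum_eigenvalues {H : Matrix n n ℂ} (hH : H.IsHermitian) :
    H.trace = Complex.ofReal (∑ i, hH.eigenvalues i) := by
  conv_lhs => rw [spectral' hH, trace_conj_unitary, Matrix.trace_diagonal]
  push_cast
  rfl

lemma traceNorm_of_posSemidef {Q : Matrix n n ℂ} (hQ : Q.PosSemidef) :
    traceNorm Q = Q.trace.re := by
  rw [traceNorm_of_isHermitian hQ.1, trace_eq_sum_eigenvalues hQ.1]
  simp only [Complex.ofReal_re]
  exact Finset.sum_congr rfl fun i _ => abs_of_nonneg (hQ.eigenvalues_nonneg i)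

lemma trace_diag_mul_diag (W : Matrix n n ℂ) (s μ : n → ℝ) :
    (Matrix.diagonal (Complex.ofReal ∘ s) * W * Matrix.diagonal (Complex.ofReal ∘ μ) * Wᴴ).trace
      = Complex.ofReal (∑ j, ∑ k, s j * μ k * Complex.normSq (W j k)) := by
  push_cast
  simp only [Matrix.trace, Matrix.diag, Matrix.mul_apply, Matrix.diagonal_apply,
    Matrix.conjTranspose_apply, Function.comp, ite_mul, zero_mul, mul_ite, mul_zero,
    Finset.sum_ite_eq, Finset.sum_ite_eq', Finset.mem_univ, if_true]
  rw [Finset.sum_congr rfl]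
  intro j _
  rw [Finset.sum_congr rfl]
  intro k _
  rw [show star (W j k) = (starRingEnd ℂ) (W j k) from rfl, ← Complex.mul_conj]
  ring

lemma trace_conj_pair (U V : Matrix.unitaryGroup n ℂ) (s μ : n → ℝ) :
    (((U : Matrix n n ℂ) * Matrix.diagonal (Complex.ofReal ∘ s) * (U : Matrix n n ℂ)ᴴ) *
      ((V : Matrix n n ℂ) * Matrix.diagonal (Complex.ofReal ∘ μ) * (V : Matrix n n ℂ)ᴴ)).trace
      = Complex.ofReal (∑ j, ∑ k, s j * μ k *
          Complex.normSq (((U : Matrix n n ℂ)ᴴ * (V : Matrix n n ℂ)) j k)) := by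
  rw [← trace_diag_mul_diag]
  set S := Matrix.diagonal (Complex.ofReal ∘ s)
  set M := Matrix.diagonal (Complex.ofReal ∘ μ)
  have h1 : ((U : Matrix n n ℂ) * S * (U : Matrix n n ℂ)ᴴ) *
      ((V : Matrix n n ℂ) * M * (V : Matrix n n ℂ)ᴴ)
      = (U : Matrix n n ℂ) * (S * ((U : Matrix n n ℂ)ᴴ * (V : Matrix n n ℂ)) * M *
          ((U : Matrix n n ℂ)ᴴ * (V : Matrix n n ℂ))ᴴ) * (U : Matrix n n ℂ)ᴴ := by
    have hUU : (U : Matrix n n ℂ) * (U : Matrix n n ℂ)ᴴ = 1 := by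
      rw [← Matrix.star_eq_conjTranspose]; exact Unitary.coe_mul_star_self U
    simp only [Matrix.conjTranspose_mul, Matrix.conjTranspose_conjTranspose, Matrix.mul_assoc]
    rw [hUU, Matrix.mul_one]
  rw [h1, Matrix.trace_mul_cycle, ← Matrix.star_eq_conjTranspose,
    Unitary.coe_star_mul_self, Matrix.one_mul]

lemma col_normSq_one (U V : Matrix.unitaryGroup n ℂ) (k : n) :
    ∑ j, Complex.normSq (((U : Matrix n n ℂ)ᴴ * (V : Matrix n n ℂ)) j k) = 1 := by
  set W : Matrix.unitaryGroup n ℂ := (star U) * V with hW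
  have hWc : (W : Matrix n n ℂ) = (U : Matrix n n ℂ)ᴴ * (V : Matrix n n ℂ) := by
    simp [hW, Matrix.star_eq_conjTranspose]
  have h1 : ((W : Matrix n n ℂ)ᴴ * (W : Matrix n n ℂ)) k k = 1 := by
    rw [← Matrix.star_eq_conjTranspose, Unitary.coe_star_mul_self W, Matrix.one_apply_eq]
  rw [Matrix.mul_apply] at h1
  have : ∀ j, ((W : Matrix n n ℂ)ᴴ) k j * (W : Matrix n n ℂ) j k
      = Complex.ofReal (Complex.normSq ((W : Matrix n n ℂ) j k)) := by
    intro j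
    rw [Matrix.conjTranspose_apply, show star ((W : Matrix n n ℂ) j k)
      = (starRingEnd ℂ) ((W : Matrix n n ℂ) j k) from rfl, Complex.normSq_eq_conj_mul_self]
  simp only [this] at h1
  rw [← Complex.ofReal_sum] at h1
  have := congrArg Complex.re h1
  simpa [hWc] using this

lemma dual_bound {M : Matrix n n ℂ} (hM : M.IsHermitian) (U : Matrix.unitaryGroup n ℂ)
    (s : n → ℝ) (hs : ∀ j, |s j| ≤ 1) :
    |((((U : Matrix n n ℂ) * Matrix.diagonal (Complex.ofReal ∘ s) * (U : Matrix n n ℂ)ᴴ) *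
        M).trace).re| ≤ traceNorm M := by
  set V := hM.eigenvectorUnitary
  have hMspec := spectral' hM
  conv_lhs => rw [hMspec]
  rw [trace_conj_pair U V s hM.eigenvalues, Complex.ofReal_re,
    traceNorm_of_isHermitian hM]
  rw [Finset.sum_comm]
  calc |∑ k, ∑ j, s j * hM.eigenvalues k *
        Complex.normSq (((U : Matrix n n ℂ)ᴴ * (V : Matrix n n ℂ)) j k)|
      ≤ ∑ k, |∑ j, s j * hM.eigenvalues k *
        Complex.normSq (((U : Matrix n n ℂ)ᴴ * (V : Matrix n n ℂ)) j k)| :=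
        Finset.abs_sum_le_sum_abs _ _
    _ ≤ ∑ k, |hM.eigenvalues k| := by
        refine Finset.sum_le_sum fun k _ => ?_
        calc |∑ j, s j * hM.eigenvalues k *
              Complex.normSq (((U : Matrix n n ℂ)ᴴ * (V : Matrix n n ℂ)) j k)|
            ≤ ∑ j, |s j * hM.eigenvalues k *
              Complex.normSq (((U : Matrix n n ℂ)ᴴ * (V : Matrix n n ℂ)) j k)| :=
              Finset.abs_sum_le_sum_abs _ _
          _ ≤ ∑ j, |hM.eigenvalues k| *
              Complex.normSq (((U : Matrix n n ℂ)ᴴ * (V : Matrix n n ℂ)) j k) := by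
              refine Finset.sum_le_sum fun j _ => ?_
              rw [abs_mul, abs_mul, abs_of_nonneg (Complex.normSq_nonneg _)]
              have := mul_le_mul_of_nonneg_right (hs j)
                (abs_nonneg (hM.eigenvalues k))
              rw [one_mul] at this
              exact mul_le_mul_of_nonneg_right this (Complex.normSq_nonneg _)
          _ = |hM.eigenvalues k| := by
              rw [← Finset.mul_sum, col_normSq_one U V k, mul_one]

lemma key_ineq {H M Q1 Q2 : Matrix n n ℂ}
    (hH : H.IsHermitian) (hM : M.IsHermitian) (hQ1 : Q1.PosSemidef) (hQ2 : Q2.PosSemidef)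
    (heq : H = M + Q1 - Q2) :
    traceNorm H ≤ traceNorm M + Q1.trace.re + Q2.trace.re := by
  classical
  set s : n → ℝ := fun j => if hH.eigenvalues j < 0 then -1 else 1 with hsdef
  have hs : ∀ j, |s j| ≤ 1 := by
    intro j; by_cases h : hH.eigenvalues j < 0 <;> simp [hsdef, h]
  set W : Matrix n n ℂ := (hH.eigenvectorUnitary : Matrix n n ℂ) *
      Matrix.diagonal (Complex.ofReal ∘ s) * (hH.eigenvectorUnitary : Matrix n n ℂ)ᴴ with hWdef
  have hWH : ((W * H).trace).re = traceNorm H := by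
    conv_lhs => rw [spectral' hH]
    rw [hWdef, trace_conj_pair hH.eigenvectorUnitary hH.eigenvectorUnitary s hH.eigenvalues,
      Complex.ofReal_re, traceNorm_of_isHermitian hH]
    have hUU : ((hH.eigenvectorUnitary : Matrix n n ℂ)ᴴ *
        (hH.eigenvectorUnitary : Matrix n n ℂ)) = 1 := by
      rw [← Matrix.star_eq_conjTranspose]; exact Unitary.coe_star_mul_self _
    rw [hUU]
    have : ∀ j k : n, s j * hH.eigenvalues k * Complex.normSq ((1 : Matrix n n ℂ) j k)
        = if k = j then s j * hH.eigenvalues j else 0 := by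
      intro j k
      by_cases h : j = k
      · subst h; simp [Matrix.one_apply_eq]
      · simp [Matrix.one_apply_ne h, Ne.symm h]
    simp only [this, Finset.sum_ite_eq, Finset.mem_univ, if_true]
    refine Finset.sum_congr rfl fun j _ => ?_
    by_cases h : hH.eigenvalues j < 0
    · simp [hsdef, h, abs_of_neg h]
    · simp [hsdef, h, abs_of_nonneg (le_of_not_gt h)]
  have hsplit : W * H = W * M + W * Q1 - W * Q2 := by
    rw [heq, Matrix.mul_sub, Matrix.mul_add]
  have htr : ((W * H).trace).re = ((W * M).trace).re + ((W * Q1).trace).re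
      - ((W * Q2).trace).re := by
    rw [hsplit, Matrix.trace_sub, Matrix.trace_add]
    simp
  have h1 := dual_bound hM hH.eigenvectorUnitary s hs
  have h2 := dual_bound hQ1.1 hH.eigenvectorUnitary s hs
  have h3 := dual_bound hQ2.1 hH.eigenvectorUnitary s hs
  rw [← hWdef] at h1 h2 h3
  rw [traceNorm_of_posSemidef hQ1] at h2
  rw [traceNorm_of_posSemidef hQ2] at h3
  rw [← hWH, htr]
  linarith [(abs_le.mp h1).2, (abs_le.mp h2).2, (abs_le.mp h3).1]

end TraceNormTheory

section PtrE

variable {A B E : Type*} [Fintype A] [Fintype B] [Fintype E]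

lemma ptrE_add {A' : Type*} (M N : Matrix (A × B × E) (A' × B × E) ℂ) :
    ptrE (M + N) = ptrE M + ptrE N := by
  ext x y; simp [ptrE, Finset.sum_add_distrib]

lemma ptrE_smul {A' : Type*} (c : ℂ) (M : Matrix (A × B × E) (A' × B × E) ℂ) :
    ptrE (c • M) = c • ptrE M := by
  ext x y; simp [ptrE, Finset.mul_sum]

lemma ptrE_conjTranspose (M : Matrix (A × B × E) (A × B × E) ℂ) :
    ptrE (Mᴴ) = (ptrE M)ᴴ := by
  ext x y
  simp [ptrE, Matrix.conjTranspose_apply]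

lemma trace_ptrE (M : Matrix (A × B × E) (A × B × E) ℂ) :
    (ptrE M).trace = M.trace := by
  simp [Matrix.trace, Matrix.diag, ptrE, Fintype.sum_prod_type]

lemma psi_hermitian (d : ℕ) : (Psi d).IsHermitian := by
  ext p q
  simp only [Psi, Matrix.conjTranspose_apply]
  by_cases h1 : q.1 = q.2 ∧ p.1 = p.2
  · rw [if_pos h1, if_pos ⟨h1.2, h1.1⟩]
    simp [Complex.star_def]
  · rw [if_neg h1, if_neg (fun h => h1 ⟨h.2, h.1⟩)]
    simp

lemma psi_mulVec (d : ℕ) (x : Fin d × Fin d → ℂ) (p : Fin d × Fin d) :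
    (Psi d *ᵥ x) p = if p.1 = p.2 then (1/(d:ℂ)) * ∑ i, x (i, i) else 0 := by
  simp only [Matrix.mulVec, dotProduct, Psi]
  by_cases hp : p.1 = p.2
  · simp only [hp, true_and, if_true]
    rw [Fintype.sum_prod_type, Finset.mul_sum]
    refine Finset.sum_congr rfl fun i _ => ?_
    simp [ite_mul]
  · simp [hp]

lemma psi_posSemidef (d : ℕ) : (Psi d).PosSemidef := by
  refine Matrix.PosSemidef.of_dotProduct_mulVec_nonneg (psi_hermitian d) fun x => ?_
  have : dotProduct (star x) (Psi d *ᵥ x)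
      = (1 / (d : ℂ)) * ((starRingEnd ℂ) (∑ i, x (i, i)) * (∑ i, x (i, i))) := by
    simp only [dotProduct, Pi.star_apply, psi_mulVec]
    rw [Fintype.sum_prod_type]
    have : ∀ i : Fin d, ∑ j : Fin d, star (x (i,j)) *
        (if (i,j).1 = (i,j).2 then (1/(d:ℂ)) * ∑ k, x (k, k) else 0)
        = star (x (i,i)) * ((1/(d:ℂ)) * ∑ k, x (k, k)) := by
      intro i
      rw [Finset.sum_eq_single i]
      · simp
      · intro j _ hj
        simp [(Ne.symm hj : ¬ i = j)]
      · simp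
    simp only [this]
    rw [← Finset.sum_mul, map_sum]
    simp only [Complex.star_def]
    ring
  rw [this, ← Complex.normSq_eq_conj_mul_self]
  have h1 : (0:ℂ) ≤ (1 / (d : ℂ)) := by
    rw [show ((1:ℂ) / (d:ℂ)) = Complex.ofReal (1 / (d:ℝ)) by push_cast; rfl]
    exact Complex.zero_le_real.mpr (by positivity)
  exact mul_nonneg h1 (Complex.zero_le_real.mpr (Complex.normSq_nonneg _))

lemma posSemidef_ptrE {M : Matrix (A × B × E) (A × B × E) ℂ} (hM : M.PosSemidef) :
    (ptrE M).PosSemidef := by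
  classical
  refine Matrix.posSemidef_iff_dotProduct_mulVec.mpr ⟨?_, ?_⟩
  · rw [Matrix.IsHermitian, ← ptrE_conjTranspose, hM.1]
  · intro x
    have he : ∀ e : E, dotProduct
        (star (fun p : A × B × E => if p.2.2 = e then x (p.1, p.2.1) else 0))
        (M *ᵥ (fun p : A × B × E => if p.2.2 = e then x (p.1, p.2.1) else 0))
        = ∑ a, ∑ b, star (x (a, b)) * ∑ a', ∑ b', M (a,b,e) (a',b',e) * x (a',b') := by
      intro e
      have hmv : ∀ p : A × B × E,
          (M *ᵥ (fun p' : A × B × E => if p'.2.2 = e then x (p'.1, p'.2.1) else 0)) p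
          = ∑ a', ∑ b', M p (a',b',e) * x (a',b') := by
        intro p
        simp only [Matrix.mulVec, dotProduct, mul_ite, mul_zero]
        rw [Fintype.sum_prod_type]
        refine Finset.sum_congr rfl fun a' _ => ?_
        rw [Fintype.sum_prod_type]
        refine Finset.sum_congr rfl fun b' _ => ?_
        simp
      simp only [dotProduct, Pi.star_apply, hmv, apply_ite (star : ℂ → ℂ), star_zero,
        ite_mul, zero_mul]
      rw [Fintype.sum_prod_type]
      refine Finset.sum_congr rfl fun a _ => ?_
      rw [Fintype.sum_prod_type]
      refine Finset.sum_congr rfl fun b _ => ?_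
      simp
    have hlhs : dotProduct (star x) (ptrE M *ᵥ x)
        = ∑ e : E, ∑ a, ∑ b, star (x (a, b)) * ∑ a', ∑ b', M (a,b,e) (a',b',e) * x (a',b') := by
      have hmv2 : ∀ y : A × B, (ptrE M *ᵥ x) y
          = ∑ a', ∑ b', (∑ e, M (y.1, y.2, e) (a',b',e)) * x (a',b') := by
        intro y
        simp only [Matrix.mulVec, dotProduct, ptrE]
        rw [Fintype.sum_prod_type]
      simp only [dotProduct, Pi.star_apply, hmv2]
      rw [Fintype.sum_prod_type]
      have hswap : ∀ (a : A) (b : B),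
          star (x (a, b)) * (∑ a', ∑ b', (∑ e, M (a, b, e) (a',b',e)) * x (a',b'))
          = ∑ e, star (x (a, b)) * ∑ a', ∑ b', M (a,b,e) (a',b',e) * x (a',b') := by
        intro a b
        rw [← Finset.mul_sum]
        congr 1
        simp only [Finset.sum_mul]
        calc ∑ a', ∑ b', ∑ e, M (a,b,e) (a',b',e) * x (a',b')
            = ∑ a', ∑ e, ∑ b', M (a,b,e) (a',b',e) * x (a',b') :=
              Finset.sum_congr rfl fun a' _ => Finset.sum_comm
          _ = ∑ e, ∑ a', ∑ b', M (a,b,e) (a',b',e) * x (a',b') := Finset.sum_comm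
      simp only [hswap]
      calc ∑ a, ∑ b, ∑ e, star (x (a, b)) * ∑ a', ∑ b', M (a,b,e) (a',b',e) * x (a',b')
          = ∑ a, ∑ e, ∑ b, star (x (a, b)) * ∑ a', ∑ b', M (a,b,e) (a',b',e) * x (a',b') :=
            Finset.sum_congr rfl fun a _ => Finset.sum_comm
        _ = ∑ e, ∑ a, ∑ b, star (x (a, b)) * ∑ a', ∑ b', M (a,b,e) (a',b',e) * x (a',b') :=
            Finset.sum_comm
    rw [hlhs]
    simp only [← he]
    exact Finset.sum_nonneg fun e _ => hM.dotProduct_mulVec_nonneg _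

end PtrE

def idxE {d_B r : ℕ} : (Fin d_B × Fin r) ≃ Fin (r * d_B) :=
  finProdFinEquiv.trans (finCongr (Nat.mul_comm d_B r))

lemma mul_psiBE (d_B r : ℕ) :
    Psi (r * d_B) * ((1 : Matrix (Fin (r*d_B)) (Fin (r*d_B)) ℂ) ⊗ₖ
      toBE (1 : Matrix (Fin (r*d_B)) (Fin (r*d_B)) ℂ))ᴴ = PsiBE d_B r := by
  ext p q
  obtain ⟨a, be⟩ := q
  simp only [Matrix.mul_apply, Matrix.conjTranspose_apply, Matrix.kroneckerMap_apply, toBE, PsiBE]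
  rw [Fintype.sum_prod_type]
  rw [Finset.sum_eq_single a (fun k _ hk => ?_) (by simp)]
  · rw [Finset.sum_eq_single (idxBE be) (fun l _ hl => ?_) (by simp)]
    · simp [Matrix.one_apply]
    · simp [Matrix.one_apply, (Ne.symm hl : ¬ idxBE be = l)]
  · apply Finset.sum_eq_zero
    intro l _
    simp [Matrix.one_apply, (Ne.symm hk : ¬ a = k)]

lemma trace_conjPsi {d : ℕ} {B E : Type*} [Fintype B] [Fintype E] [DecidableEq B] [DecidableEq E]
    (N : Matrix (B × E) (Fin d) ℂ) :
    ((((1 : Matrix (Fin d) (Fin d) ℂ) ⊗ₖ N) * Psi d *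
        ((1 : Matrix (Fin d) (Fin d) ℂ) ⊗ₖ N)ᴴ)).trace
      = (1/(d:ℂ)) * ∑ p : B × E, ∑ i : Fin d, Complex.ofReal (Complex.normSq (N p i)) := by
  set X := ((1 : Matrix (Fin d) (Fin d) ℂ) ⊗ₖ N) with hX
  have h1 : ∀ (i : Fin d) (p : B × E) (k : Fin d) (l : Fin d),
      (X * Psi d) (i, p) (k, l) = if k = l then N p i * (1/(d:ℂ)) else 0 := by
    intro i p k l
    simp only [hX, Matrix.mul_apply, Matrix.kroneckerMap_apply, Psi]
    rw [Fintype.sum_prod_type]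
    rw [Finset.sum_eq_single i (fun j _ hj => ?_) (by simp)]
    · rw [Finset.sum_eq_single i (fun a _ ha => ?_) (by simp)]
      · by_cases hkl : k = l <;> simp [Matrix.one_apply, hkl]
      · simp [(Ne.symm ha : ¬ i = a)]
    · apply Finset.sum_eq_zero
      intro a _
      simp [Matrix.one_apply, (Ne.symm hj : ¬ i = j)]
  have h3 : ∀ (i : Fin d) (p : B × E), ((X * Psi d) * Xᴴ) (i,p) (i,p)
      = (1/(d:ℂ)) * Complex.ofReal (Complex.normSq (N p i)) := by
    intro i p
    rw [Matrix.mul_apply]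
    have h2 : ∀ (q : Fin d × Fin d), (X * Psi d) (i, p) q * (Xᴴ) q (i, p)
        = if q = (i, i) then N p i * (1/(d:ℂ)) * star (N p i) else 0 := by
      rintro ⟨k, l⟩
      rw [Matrix.conjTranspose_apply, hX, Matrix.kroneckerMap_apply, h1]
      by_cases hk : k = i
      · subst hk
        by_cases hl : l = k
        · subst hl; simp [Matrix.one_apply]
        · rw [if_neg (show ¬ k = l from fun h => hl h.symm), zero_mul,
            if_neg (show ¬ ((k,l) = (k,k)) by simp [Prod.ext_iff, hl])]
      · rw [if_neg (show ¬ ((k,l) = (i,i)) by simp [Prod.ext_iff, hk])]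
        simp [Matrix.one_apply, (Ne.symm hk : ¬ i = k)]
    rw [Finset.sum_congr rfl fun q _ => h2 q, Finset.sum_ite_eq' Finset.univ ((i : Fin d), i) _]
    simp only [Finset.mem_univ, if_true]
    rw [show star (N p i) = (starRingEnd ℂ) (N p i) from rfl, mul_assoc, ← Complex.mul_conj]
    ring
  simp only [Matrix.trace, Matrix.diag]
  rw [Fintype.sum_prod_type]
  simp only [h3]
  rw [Finset.sum_comm, Finset.mul_sum]
  refine Finset.sum_congr rfl fun p _ => ?_
  rw [Finset.mul_sum]

def Qm (d_B r : ℕ) (ε θ : ℝ) (U : Matrix (Fin (r * d_B)) (Fin (r * d_B)) ℂ) :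
    Matrix (Fin (r * d_B) × Fin d_B) (Fin (r * d_B) × Fin d_B) ℂ :=
  ptrE (((1 : Matrix (Fin (r * d_B)) (Fin (r * d_B)) ℂ) ⊗ₖ toBE (U * Omat (r * d_B) ε θ * Uᴴ)) *
    Psi (r * d_B) *
    ((1 : Matrix (Fin (r * d_B)) (Fin (r * d_B)) ℂ) ⊗ₖ toBE (U * Omat (r * d_B) ε θ * Uᴴ))ᴴ)

def D0 (d_B r : ℕ) : Matrix (Fin (r * d_B) × Fin d_B) (Fin (r * d_B) × Fin d_B) ℂ :=
  ptrE (((1 : Matrix (Fin (r * d_B)) (Fin (r * d_B)) ℂ) ⊗ₖ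
    toBE (1 : Matrix (Fin (r * d_B)) (Fin (r * d_B)) ℂ)) * PsiBE d_B r)

def T0 (d_B r : ℕ) (ε θ : ℝ) : Matrix (Fin (r * d_B) × Fin d_B) (Fin (r * d_B) × Fin d_B) ℂ :=
  ptrE (((1 : Matrix (Fin (r * d_B)) (Fin (r * d_B)) ℂ) ⊗ₖ
      toBE (1 : Matrix (Fin (r * d_B)) (Fin (r * d_B)) ℂ)) * Psi (r * d_B) *
    ((1 : Matrix (Fin (r * d_B)) (Fin (r * d_B)) ℂ) ⊗ₖ
      toBE (1 : Matrix (Fin (r * d_B)) (Fin (r * d_B)) ℂ))ᴴ) +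
  ((Omat (r * d_B) ε θ).trace / ((r * d_B : ℕ) : ℂ)) • D0 d_B r +
  (((Omat (r * d_B) ε θ).trace / ((r * d_B : ℕ) : ℂ)) • D0 d_B r)ᴴ

lemma toBE_add {d_B r : ℕ} (M N : Matrix (Fin (r * d_B)) (Fin (r * d_B)) ℂ) :
    toBE (M + N) = toBE M + toBE N := rfl

lemma toBE_smul {d_B r : ℕ} (c : ℂ) (M : Matrix (Fin (r * d_B)) (Fin (r * d_B)) ℂ) :
    toBE (c • M) = c • toBE M := rfl

set_option maxHeartbeats 1000000 in
lemma Jeq_decomp (d_B r : ℕ) (ε θ : ℝ) (U : Matrix.unitaryGroup (Fin (r * d_B)) ℂ) :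
    Jeq d_B r ε θ ↑U = T0 d_B r ε θ +
      (Amat d_B r ε θ ↑U + (Amat d_B r ε θ ↑U)ᴴ + Qm d_B r ε θ ↑U) := by
  have hUU : (U : Matrix (Fin (r * d_B)) (Fin (r * d_B)) ℂ) *
      (U : Matrix (Fin (r * d_B)) (Fin (r * d_B)) ℂ)ᴴ = 1 := by
    rw [← Matrix.star_eq_conjTranspose]; exact Unitary.coe_mul_star_self U
  have hV : Veq d_B r ε θ ↑U = toBE (1 : Matrix (Fin (r * d_B)) (Fin (r * d_B)) ℂ) +
      toBE ((U : Matrix (Fin (r * d_B)) (Fin (r * d_B)) ℂ) * Omat (r * d_B) ε θ *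
        (U : Matrix (Fin (r * d_B)) (Fin (r * d_B)) ℂ)ᴴ) := by
    rw [Veq, ← toBE_add]
    congr 1
    rw [Matrix.mul_add, Matrix.mul_one, Matrix.add_mul, hUU]
  have hMsplit : toBE ((U : Matrix (Fin (r * d_B)) (Fin (r * d_B)) ℂ) * Omat (r * d_B) ε θ *
        (U : Matrix (Fin (r * d_B)) (Fin (r * d_B)) ℂ)ᴴ)
      = toBE ((U : Matrix (Fin (r * d_B)) (Fin (r * d_B)) ℂ) * Obar (r * d_B) ε θ *
          (U : Matrix (Fin (r * d_B)) (Fin (r * d_B)) ℂ)ᴴ) +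
        ((Omat (r * d_B) ε θ).trace / ((r * d_B : ℕ) : ℂ)) •
          toBE (1 : Matrix (Fin (r * d_B)) (Fin (r * d_B)) ℂ) := by
    rw [← toBE_smul, ← toBE_add]
    congr 1
    rw [Obar, Matrix.mul_sub, Matrix.sub_mul, Matrix.mul_smul, Matrix.smul_mul,
      Matrix.mul_one, hUU]
    rw [sub_add_cancel]
  set c : ℂ := (Omat (r * d_B) ε θ).trace / ((r * d_B : ℕ) : ℂ) with hc
  set X0 : Matrix (Fin (r * d_B) × (Fin d_B × Fin r)) (Fin (r * d_B) × Fin (r * d_B)) ℂ :=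
    (1 : Matrix (Fin (r * d_B)) (Fin (r * d_B)) ℂ) ⊗ₖ
      toBE (1 : Matrix (Fin (r * d_B)) (Fin (r * d_B)) ℂ) with hX0
  set X1 : Matrix (Fin (r * d_B) × (Fin d_B × Fin r)) (Fin (r * d_B) × Fin (r * d_B)) ℂ :=
    (1 : Matrix (Fin (r * d_B)) (Fin (r * d_B)) ℂ) ⊗ₖ
      toBE ((U : Matrix (Fin (r * d_B)) (Fin (r * d_B)) ℂ) * Omat (r * d_B) ε θ *
        (U : Matrix (Fin (r * d_B)) (Fin (r * d_B)) ℂ)ᴴ) with hX1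
  have hkron : (1 : Matrix (Fin (r * d_B)) (Fin (r * d_B)) ℂ) ⊗ₖ Veq d_B r ε θ ↑U = X0 + X1 := by
    rw [hV, Matrix.kronecker_add]
  have hexp : ((X0 + X1) * Psi (r * d_B) * (X0 + X1)ᴴ)
      = X0 * Psi (r * d_B) * X0ᴴ + X1 * Psi (r * d_B) * X0ᴴ +
        X0 * Psi (r * d_B) * X1ᴴ + X1 * Psi (r * d_B) * X1ᴴ := by
    rw [Matrix.conjTranspose_add, Matrix.add_mul, Matrix.add_mul, Matrix.mul_add, Matrix.mul_add]
    abel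
  have hcross : ptrE (X1 * Psi (r * d_B) * X0ᴴ) = Amat d_B r ε θ ↑U + c • D0 d_B r := by
    rw [Matrix.mul_assoc, hX0, mul_psiBE, hX1, hMsplit, Matrix.kronecker_add,
      Matrix.kronecker_smul, Matrix.add_mul, Matrix.smul_mul, ptrE_add, ptrE_smul]
    rw [Amat, D0]
  have hcross2 : ptrE (X0 * Psi (r * d_B) * X1ᴴ) = (Amat d_B r ε θ ↑U + c • D0 d_B r)ᴴ := by
    rw [← hcross, ← ptrE_conjTranspose]
    congr 1
    rw [Matrix.conjTranspose_mul, Matrix.conjTranspose_mul, Matrix.conjTranspose_conjTranspose,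
      (psi_hermitian (r * d_B)).eq, Matrix.mul_assoc]
  rw [Jeq, hkron, hexp, ptrE_add, ptrE_add, ptrE_add, hcross, hcross2]
  rw [T0, Qm, ← hc, ← hX0, ← hX1]
  simp only [Matrix.conjTranspose_add]
  abel

lemma Jeq_posSemidef (d_B r : ℕ) (ε θ : ℝ) (U : Matrix (Fin (r * d_B)) (Fin (r * d_B)) ℂ) :
    (Jeq d_B r ε θ U).PosSemidef :=
  posSemidef_ptrE ((psi_posSemidef (r * d_B)).mul_mul_conjTranspose_same _)

lemma Qm_posSemidef (d_B r : ℕ) (ε θ : ℝ) (U : Matrix (Fin (r * d_B)) (Fin (r * d_B)) ℂ) :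
    (Qm d_B r ε θ U).PosSemidef :=
  posSemidef_ptrE ((psi_posSemidef (r * d_B)).mul_mul_conjTranspose_same _)

lemma omat_diag_normSq_le (d : ℕ) (ε θ : ℝ) (j : Fin d) :
    Complex.normSq ((if Odd d ∧ (j : ℕ) = d - 1 then 0
      else if Even (j : ℕ) then (ε : ℂ) * Complex.exp (Complex.I * (θ : ℂ))
      else (ε : ℂ) * Complex.exp (-(Complex.I * (θ : ℂ)))) : ℂ) ≤ ε ^ 2 := by
  have habs : ∀ z : ℂ, z.re = 0 → Complex.normSq (Complex.exp z) = 1 := by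
    intro z hz
    rw [Complex.normSq_eq_norm_sq, Complex.norm_exp, hz, Real.exp_zero, one_pow]
  split_ifs with h1 h2
  · simp [Complex.normSq_zero]
    positivity
  · rw [Complex.normSq_mul, habs _ (by simp), Complex.normSq_ofReal]
    rw [mul_one, ← sq]
  · rw [Complex.normSq_mul, habs _ (by simp), Complex.normSq_ofReal]
    rw [mul_one, ← sq]

lemma frob_trace {n m : Type*} [Fintype n] [Fintype m] (M : Matrix n m ℂ) :
    (M * Mᴴ).trace = ∑ a, ∑ i, Complex.ofReal (Complex.normSq (M a i)) := by
  simp only [Matrix.trace, Matrix.diag, Matrix.mul_apply, Matrix.conjTranspose_apply]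
  refine Finset.sum_congr rfl fun a _ => Finset.sum_congr rfl fun i _ => ?_
  rw [show star (M a i) = (starRingEnd ℂ) (M a i) from rfl, Complex.mul_conj]

set_option maxHeartbeats 1000000 in
lemma Qm_trace_le (d_B r : ℕ) (hB : 1 ≤ d_B) (hr : 1 ≤ r) (ε θ : ℝ)
    (U : Matrix.unitaryGroup (Fin (r * d_B)) ℂ) :
    (Qm d_B r ε θ ↑U).trace.re ≤ ε ^ 2 := by
  have hd : 0 < (r * d_B : ℕ) := Nat.mul_pos hr hB
  have h1 : (Qm d_B r ε θ ↑U).trace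
      = (1/(((r * d_B : ℕ)) : ℂ)) * ∑ p : Fin d_B × Fin r, ∑ i : Fin (r * d_B),
          Complex.ofReal (Complex.normSq
            (toBE ((U : Matrix (Fin (r * d_B)) (Fin (r * d_B)) ℂ) * Omat (r * d_B) ε θ *
              (U : Matrix (Fin (r * d_B)) (Fin (r * d_B)) ℂ)ᴴ) p i)) := by
    rw [Qm, trace_ptrE, trace_conjPsi]
  set M : Matrix (Fin (r * d_B)) (Fin (r * d_B)) ℂ :=
    (U : Matrix (Fin (r * d_B)) (Fin (r * d_B)) ℂ) * Omat (r * d_B) ε θ *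
      (U : Matrix (Fin (r * d_B)) (Fin (r * d_B)) ℂ)ᴴ with hMdef
  have h2 : ∑ p : Fin d_B × Fin r, ∑ i : Fin (r * d_B),
        Complex.ofReal (Complex.normSq (toBE M p i))
      = ∑ a : Fin (r * d_B), ∑ i : Fin (r * d_B), Complex.ofReal (Complex.normSq (M a i)) :=
    Equiv.sum_comp idxE (fun a => ∑ i, Complex.ofReal (Complex.normSq (M a i)))
  have hMH : Mᴴ = (U : Matrix (Fin (r * d_B)) (Fin (r * d_B)) ℂ) * (Omat (r * d_B) ε θ)ᴴ *
      (U : Matrix (Fin (r * d_B)) (Fin (r * d_B)) ℂ)ᴴ := by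
    rw [hMdef]
    simp [Matrix.conjTranspose_mul, Matrix.mul_assoc]
  have h4 : (M * Mᴴ).trace = (Omat (r * d_B) ε θ * (Omat (r * d_B) ε θ)ᴴ).trace := by
    rw [hMH, hMdef, conj_mul_conj U (Omat (r * d_B) ε θ) ((Omat (r * d_B) ε θ)ᴴ),
      trace_conj_unitary]
  set f : Fin (r * d_B) → ℂ := fun j =>
    if Odd (r * d_B) ∧ (j : ℕ) = (r * d_B) - 1 then 0
    else if Even (j : ℕ) then (ε : ℂ) * Complex.exp (Complex.I * (θ : ℂ))
    else (ε : ℂ) * Complex.exp (-(Complex.I * (θ : ℂ))) with hf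
  have h5 : (Omat (r * d_B) ε θ * (Omat (r * d_B) ε θ)ᴴ).trace
      = ∑ j, Complex.ofReal (Complex.normSq (f j)) := by
    rw [show Omat (r * d_B) ε θ = Matrix.diagonal f from rfl]
    rw [Matrix.diagonal_conjTranspose, Matrix.diagonal_mul_diagonal, Matrix.trace_diagonal]
    refine Finset.sum_congr rfl fun j _ => ?_
    rw [Pi.star_apply, show star (f j) = (starRingEnd ℂ) (f j) from rfl, Complex.mul_conj]
  have htot : (Qm d_B r ε θ ↑U).trace
      = Complex.ofReal ((1/((r * d_B : ℕ) : ℝ)) * ∑ j, Complex.normSq (f j)) := by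
    rw [h1, h2, ← frob_trace, h4, h5]
    push_cast
    ring
  rw [htot, Complex.ofReal_re]
  have hsum : ∑ j : Fin (r * d_B), Complex.normSq (f j) ≤ ((r * d_B : ℕ) : ℝ) * ε ^ 2 := by
    calc ∑ j : Fin (r * d_B), Complex.normSq (f j)
        ≤ ∑ _j : Fin (r * d_B), ε ^ 2 :=
          Finset.sum_le_sum fun j _ => omat_diag_normSq_le (r * d_B) ε θ j
      _ = ((r * d_B : ℕ) : ℝ) * ε ^ 2 := by
          rw [Finset.sum_const, Finset.card_univ, Fintype.card_fin, nsmul_eq_mul]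
  have hdpos : (0:ℝ) < ((r * d_B : ℕ) : ℝ) := by exact_mod_cast hd
  have := mul_le_mul_of_nonneg_left hsum (le_of_lt (by positivity : (0:ℝ) < 1/((r * d_B : ℕ) : ℝ)))
  calc (1/((r * d_B : ℕ) : ℝ)) * ∑ j, Complex.normSq (f j)
      ≤ (1/((r * d_B : ℕ) : ℝ)) * (((r * d_B : ℕ) : ℝ) * ε ^ 2) := this
    _ = ε ^ 2 := by field_simp


/-- `‖J_{U₁} − J_{U₂}‖₁ ≥ ‖A_{U₁} + A_{U₁}† − A_{U₂} − A_{U₂}†‖₁ − 2ε²`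
in the case `d_A = r·d_B`. -/
theorem stmt_19 (d_B r : ℕ) (hB : 1 ≤ d_B) (hr : 1 ≤ r) (ε θ : ℝ)
    (hε0 : 0 < ε) (hε1 : ε < 1)
    (hθ1 : Real.pi / 2 < θ) (hθ2 : θ ≤ Real.pi) (hcos : Real.cos θ = -ε / 2)
    (U₁ U₂ : Matrix.unitaryGroup (Fin (r * d_B)) ℂ) :
    traceNorm (Amat d_B r ε θ ↑U₁ + (Amat d_B r ε θ ↑U₁)ᴴ -
        Amat d_B r ε θ ↑U₂ - (Amat d_B r ε θ ↑U₂)ᴴ) - 2 * ε ^ 2 ≤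
      traceNorm (Jeq d_B r ε θ ↑U₁ - Jeq d_B r ε θ ↑U₂) := by
  have hJ1 := Jeq_decomp d_B r ε θ U₁
  have hJ2 := Jeq_decomp d_B r ε θ U₂
  have heq : Amat d_B r ε θ ↑U₁ + (Amat d_B r ε θ ↑U₁)ᴴ -
        Amat d_B r ε θ ↑U₂ - (Amat d_B r ε θ ↑U₂)ᴴ
      = (Jeq d_B r ε θ ↑U₁ - Jeq d_B r ε θ ↑U₂) + Qm d_B r ε θ ↑U₂ - Qm d_B r ε θ ↑U₁ := by
    rw [hJ1, hJ2]
    abel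
  have hH : (Amat d_B r ε θ ↑U₁ + (Amat d_B r ε θ ↑U₁)ᴴ -
      Amat d_B r ε θ ↑U₂ - (Amat d_B r ε θ ↑U₂)ᴴ).IsHermitian := by
    show _ᴴ = _
    simp only [Matrix.conjTranspose_sub, Matrix.conjTranspose_add,
      Matrix.conjTranspose_conjTranspose]
    abel
  have hM : (Jeq d_B r ε θ ↑U₁ - Jeq d_B r ε θ ↑U₂).IsHermitian :=
    ((Jeq_posSemidef d_B r ε θ ↑U₁).1).sub ((Jeq_posSemidef d_B r ε θ ↑U₂).1)
  have hkey := key_ineq hH hM (Qm_posSemidef d_B r ε θ ↑U₂) (Qm_posSemidef d_B r ε θ ↑U₁) heq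
  have hq1 := Qm_trace_le d_B r hB hr ε θ U₂
  have hq2 := Qm_trace_le d_B r hB hr ε θ U₁
  linarith

end Stmt
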